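/- lim_{Δ→0⁺} of the download cost Mω(ρ_BS + (ρ_D2D hα/F − ρ_BS)·p_D2D(Δ)) equals Mω ρ_D2D hα/F, and lim_{Δ→∞} equals Mω ρ_BS, for μ > 0. -/

import Mathlib

/-!
Writing `a i = iμ` and `c i = ∏_{j ≠ i} j/(j − i)`, `p_D2D(Δ) = ∑ c i/a i · (1 − e^{−a i Δ})/Δ`.
As `Δ → 0⁺` each difference quotient tends to the derivative `a i`, so `p_D2D → ∑ c i`, which
is `1` because the `c i` are the values at `0` of the Lagrange basis on the nodes `h, …, m`.
As `Δ → ∞` the numerators stay bounded, so `p_D2D → 0`.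
-/

open Real Filter Finset Topology

theorem Lagrange.sum_prod_div_sub_eq_one {F ι : Type*} [Field F] [DecidableEq ι] {s : Finset ι}
    {v : ι → F} (hvs : Set.InjOn v s) (hs : s.Nonempty) :
    ∑ i ∈ s, ∏ j ∈ s.erase i, v j / (v j - v i) = 1 := by
  have h := congrArg (Polynomial.eval 0) (Lagrange.sum_basis hvs hs)
  rw [Polynomial.eval_finsetSum, Polynomial.eval_one] at h
  rw [← h]
  refine sum_congr rfl fun i _ => ?_
  rw [Lagrange.basis, Polynomial.eval_prod]
  refine prod_congr rfl fun j _ => ?_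
  rw [Lagrange.basisDivisor, Polynomial.eval_mul, Polynomial.eval_C, Polynomial.eval_sub,
    Polynomial.eval_X, Polynomial.eval_C, ← neg_sub, div_neg]
  ring

theorem tendsto_one_sub_exp_neg_mul_div_nhdsGT_zero (a : ℝ) :
    Tendsto (fun x => (1 - exp (-a * x)) / x) (𝓝[>] 0) (𝓝 a) := by
  have hderiv : HasDerivAt (fun x => 1 - exp (-a * x)) a 0 := by
    simpa using (((hasDerivAt_id (0 : ℝ)).const_mul (-a)).exp).const_sub 1
  refine ((hasDerivAt_iff_tendsto_slope.1 hderiv).mono_left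
    (nhdsWithin_mono _ fun x hx => ne_of_gt hx)).congr fun x => ?_
  simp [slope_def_field]

theorem tendsto_one_sub_exp_neg_mul_div_atTop {a : ℝ} (ha : 0 < a) :
    Tendsto (fun x => (1 - exp (-a * x)) / x) atTop (𝓝 0) := by
  have hexp : Tendsto (fun x => exp (-a * x)) atTop (𝓝 0) :=
    tendsto_exp_atBot.comp (tendsto_id.const_mul_atTop_of_neg (neg_neg_iff_pos.2 ha))
  simpa using (tendsto_const_nhds.sub hexp).div_atTop tendsto_id

section ExponentialMixture

variable {ι : Type*} (s : Finset ι) (a c : ι → ℝ)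

theorem inv_mul_sum_one_sub_exp_div_eq (x : ℝ) :
    1 / x * ∑ i ∈ s, (1 - exp (-a i * x)) / a i * c i =
      ∑ i ∈ s, c i / a i * ((1 - exp (-a i * x)) / x) := by
  rw [mul_sum]
  exact sum_congr rfl fun i _ => by ring

theorem tendsto_inv_mul_sum_one_sub_exp_div_nhdsGT_zero (ha : ∀ i ∈ s, a i ≠ 0) :
    Tendsto (fun x => 1 / x * ∑ i ∈ s, (1 - exp (-a i * x)) / a i * c i) (𝓝[>] 0)
      (𝓝 (∑ i ∈ s, c i)) := by
  simp only [inv_mul_sum_one_sub_exp_div_eq]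
  refine tendsto_finsetSum s fun i hi => ?_
  convert (tendsto_one_sub_exp_neg_mul_div_nhdsGT_zero (a i)).const_mul (c i / a i) using 2
  field_simp [ha i hi]

theorem tendsto_inv_mul_sum_one_sub_exp_div_atTop (ha : ∀ i ∈ s, 0 < a i) :
    Tendsto (fun x => 1 / x * ∑ i ∈ s, (1 - exp (-a i * x)) / a i * c i) atTop (𝓝 0) := by
  simp only [inv_mul_sum_one_sub_exp_div_eq]
  simpa using tendsto_finsetSum s fun i hi =>
    (tendsto_one_sub_exp_neg_mul_div_atTop (ha i hi)).const_mul (c i / a i)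

end ExponentialMixture

theorem download_cost_limits_general (M ω F α ρBS ρD2D μ : ℝ) (hμ : 0 < μ)
    (h m : ℕ) (h1 : 1 ≤ h) (hhm : h ≤ m)
    (pD2D Cd : ℝ → ℝ)
    (hp : ∀ Δ, pD2D Δ = (1 / Δ) * ∑ i ∈ Finset.Icc h m,
        (1 - Real.exp (-((i : ℝ) * μ) * Δ)) / ((i : ℝ) * μ) *
          ∏ j ∈ (Finset.Icc h m).erase i, (j : ℝ) / ((j : ℝ) - (i : ℝ)))
    (hCd : ∀ Δ, Cd Δ = M * ω * (ρBS + (ρD2D * (h * α) / F - ρBS) * pD2D Δ)) :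
    Tendsto Cd (nhdsWithin 0 (Set.Ioi 0)) (nhds (M * ω * ρD2D * (h * α) / F)) ∧
    Tendsto Cd atTop (nhds (M * ω * ρBS)) := by
  have hrate : ∀ i ∈ Finset.Icc h m, 0 < (i : ℝ) * μ := fun i hi =>
    mul_pos (Nat.cast_pos.2 (h1.trans (mem_Icc.1 hi).1)) hμ
  have hp0 : Tendsto pD2D (𝓝[>] 0) (𝓝 1) := by
    rw [funext hp]
    convert tendsto_inv_mul_sum_one_sub_exp_div_nhdsGT_zero (Icc h m) (fun i : ℕ => (i : ℝ) * μ) _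
      fun i hi => (hrate i hi).ne'
    exact (Lagrange.sum_prod_div_sub_eq_one Nat.cast_injective.injOn
      ⟨h, mem_Icc.2 ⟨le_rfl, hhm⟩⟩).symm
  have hpTop : Tendsto pD2D atTop (𝓝 0) := by
    rw [funext hp]
    exact tendsto_inv_mul_sum_one_sub_exp_div_atTop (Icc h m) (fun i : ℕ => (i : ℝ) * μ) _ hrate
  rw [funext hCd]
  constructor
  · convert ((hp0.const_mul (ρD2D * (h * α) / F - ρBS)).const_add ρBS).const_mul (M * ω) using 2
    ring
  · convert ((hpTop.const_mul (ρD2D * (h * α) / F - ρBS)).const_add ρBS).const_mul (M * ω) using 2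
    ring

/-- `lim_{Δ→0⁺}` of the download cost `Mω(ρ_BS + (ρ_D2D hα/F − ρ_BS)·p_D2D(Δ))` equals
`Mω ρ_D2D hα/F`, and `lim_{Δ→∞}` equals `Mω ρ_BS`, for `μ > 0`. -/
theorem download_cost_limits (M ω F α ρBS ρD2D μ : ℝ)
    (hM : 0 < M) (hω : 0 < ω) (hF : 0 < F) (hα : 0 < α)
    (hρBS : 0 < ρBS) (hρD2D : 0 < ρD2D) (hμ : 0 < μ)
    (h m : ℕ) (h1 : 1 ≤ h) (hhm : h ≤ m)
    (pD2D Cd : ℝ → ℝ)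
    (hp : ∀ Δ, pD2D Δ = (1 / Δ) * ∑ i ∈ Finset.Icc h m,
        (1 - Real.exp (-((i : ℝ) * μ) * Δ)) / ((i : ℝ) * μ) *
          ∏ j ∈ (Finset.Icc h m).erase i, (j : ℝ) / ((j : ℝ) - (i : ℝ)))
    (hCd : ∀ Δ, Cd Δ = M * ω * (ρBS + (ρD2D * (h * α) / F - ρBS) * pD2D Δ)) :
    Tendsto Cd (nhdsWithin 0 (Set.Ioi 0)) (nhds (M * ω * ρD2D * (h * α) / F)) ∧
    Tendsto Cd atTop (nhds (M * ω * ρBS)) :=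
  download_cost_limits_general M ω F α ρBS ρD2D μ hμ h m h1 hhm pD2D Cd hp hCd
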